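/- arXiv:2305.19391 — 5 statements merged into one kernel-verified Lean document; each statement's English description precedes it below -/
import Mathlib

section
/- Let K ≥ 1 and let 0 ≤ ε ≤ 0.381. Suppose x, y ∈ ℝ^K lie in the probability simplex Δ_K and satisfy ‖x‖² ≥ 1 − ε and ‖y‖² ≥ 1 − ε (Euclidean norm), and ⟨x, y⟩ ≤ ε. Then there is no index k ∈ {1,…,K} that simultaneously maximizes both vectors; that is, there is no k with x_k = max_i x_i and y_k = max_i y_i. -/
/-- Membership in the probability simplex Δ_K. -/
def InSimplex {K : ℕ} (x : Fin K → ℝ) : Prop :=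
  (∀ k, 0 ≤ x k) ∧ ∑ k, x k = 1

theorem stmt8 (K : ℕ) (hK : 1 ≤ K) (ε : ℝ) (hε0 : 0 ≤ ε) (hε1 : ε ≤ 0.381)
    (x y : Fin K → ℝ) (hx : InSimplex x) (hy : InSimplex y)
    (hxn : 1 - ε ≤ ∑ k, (x k) ^ 2) (hyn : 1 - ε ≤ ∑ k, (y k) ^ 2)
    (hip : ∑ k, x k * y k ≤ ε) :
    ¬ ∃ k, (∀ i, x i ≤ x k) ∧ (∀ i, y i ≤ y k) := by
  rintro ⟨k, hxk, hyk⟩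
  obtain ⟨hx0, hx1⟩ := hx
  obtain ⟨hy0, hy1⟩ := hy
  have hxmax : ∑ i, (x i) ^ 2 ≤ x k := by
    calc ∑ i, (x i) ^ 2 ≤ ∑ i, x i * x k := by
          apply Finset.sum_le_sum
          intro i _
          have := hxk i
          nlinarith [hx0 i]
      _ = x k := by rw [← Finset.sum_mul, hx1, one_mul]
  have hymax : ∑ i, (y i) ^ 2 ≤ y k := by
    calc ∑ i, (y i) ^ 2 ≤ ∑ i, y i * y k := by
          apply Finset.sum_le_sum
          intro i _
          have := hyk i
          nlinarith [hy0 i]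
      _ = y k := by rw [← Finset.sum_mul, hy1, one_mul]
  have hxk' : 1 - ε ≤ x k := le_trans hxn hxmax
  have hyk' : 1 - ε ≤ y k := le_trans hyn hymax
  have hip' : x k * y k ≤ ∑ i, x i * y i := by
    have hk : k ∈ Finset.univ := Finset.mem_univ k
    exact Finset.single_le_sum (f := fun i => x i * y i)
      (fun i _ => mul_nonneg (hx0 i) (hy0 i)) hk
  nlinarith
end

section
/- Let K ≥ 1 and let U ∈ ℝ^{K×K} be a matrix whose every column lies in the probability simplex Δ_K. Let η ≥ 0 satisfy K·η ≤ 0.381, and suppose ‖UᵀU − I_K‖_F² ≤ K²·η². Then there exists a K×K permutation matrix Π such that ‖Π·U − I_K‖_F² ≤ 2·K²·η. -/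
open Matrix
/-- Squared Frobenius norm of a real matrix. -/
noncomputable def frobSq {α β : Type*} [Fintype α] [Fintype β] (A : Matrix α β ℝ) : ℝ :=
  ∑ i, ∑ j, (A i j) ^ 2

/-- The permutation matrix of `σ` (the identity matrix with its rows permuted by `σ`). -/
def permMat {K : ℕ} (σ : Equiv.Perm (Fin K)) : Matrix (Fin K) (Fin K) ℝ :=
  Matrix.of fun i j => if j = σ i then 1 else 0

theorem stmt10 (K : ℕ) (hK : 1 ≤ K) (U : Matrix (Fin K) (Fin K) ℝ)
    (hU : ∀ j, (∀ i, 0 ≤ U i j) ∧ ∑ i, U i j = 1)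
    (η : ℝ) (hη : 0 ≤ η) (hKη : (K : ℝ) * η ≤ 0.381)
    (hclose : frobSq (Uᵀ * U - 1) ≤ (K : ℝ) ^ 2 * η ^ 2) :
    ∃ σ : Equiv.Perm (Fin K), frobSq (permMat σ * U - 1) ≤ 2 * (K : ℝ) ^ 2 * η := by
  haveI : NeZero K := ⟨by omega⟩
  set t : ℝ := (K : ℝ) * η with ht
  have ht0 : 0 ≤ t := mul_nonneg (Nat.cast_nonneg K) hη
  -- each squared entry of UᵀU - 1 is at most t^2
  have hsq : ∀ j k, ((Uᵀ * U - 1) j k) ^ 2 ≤ t ^ 2 := by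
    intro j k
    have h1 : ((Uᵀ * U - 1) j k) ^ 2 ≤ frobSq (Uᵀ * U - 1) := by
      unfold frobSq
      calc ((Uᵀ * U - 1) j k) ^ 2
          ≤ ∑ k', ((Uᵀ * U - 1) j k') ^ 2 :=
            Finset.single_le_sum (f := fun k' => ((Uᵀ * U - 1) j k') ^ 2)
              (fun _ _ => sq_nonneg _) (Finset.mem_univ k)
        _ ≤ _ :=
            Finset.single_le_sum
              (f := fun i => ∑ j', ((Uᵀ * U - 1) i j') ^ 2)
              (fun _ _ => Finset.sum_nonneg fun _ _ => sq_nonneg _) (Finset.mem_univ j)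
    have : ((Uᵀ * U - 1) j k) ^ 2 ≤ (K : ℝ) ^ 2 * η ^ 2 := le_trans h1 hclose
    calc ((Uᵀ * U - 1) j k) ^ 2 ≤ (K : ℝ) ^ 2 * η ^ 2 := this
      _ = t ^ 2 := by ring
  -- s j = squared norm of column j
  set s : Fin K → ℝ := fun j => ∑ i, (U i j) ^ 2 with hs
  have hdiag : ∀ j, 1 - s j ≤ t := by
    intro j
    have h := hsq j j
    have he : (Uᵀ * U - 1) j j = s j - 1 := by
      simp [Matrix.sub_apply, Matrix.mul_apply, Matrix.one_apply_eq, hs, sq]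
    rw [he] at h
    nlinarith [sq_nonneg (s j - 1 + t)]
  have hoff : ∀ j k, j ≠ k → (∑ i, U i j * U i k) ≤ t := by
    intro j k hjk
    have h := hsq j k
    have he : (Uᵀ * U - 1) j k = ∑ i, U i j * U i k := by
      simp [Matrix.sub_apply, Matrix.mul_apply, Matrix.one_apply, hjk]
    rw [he] at h
    have hnn : 0 ≤ ∑ i, U i j * U i k :=
      Finset.sum_nonneg fun i _ => mul_nonneg ((hU j).1 i) ((hU k).1 i)
    nlinarith
  -- choose the max entry of each column
  have hmax : ∀ j : Fin K, ∃ i, ∀ i', U i' j ≤ U i j := by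
    intro j
    obtain ⟨i, _, hi⟩ := Finset.exists_max_image Finset.univ (fun i => U i j)
      ⟨(⟨0, by omega⟩ : Fin K), Finset.mem_univ _⟩
    exact ⟨i, fun i' => hi i' (Finset.mem_univ _)⟩
  choose f hf using hmax
  have hfs : ∀ j, s j ≤ U (f j) j := by
    intro j
    have h1 : s j ≤ ∑ i, U (f j) j * U i j := by
      apply Finset.sum_le_sum
      intro i _
      rw [sq]
      exact mul_le_mul_of_nonneg_right (hf j i) ((hU j).1 i)
    calc s j ≤ ∑ i, U (f j) j * U i j := h1
      _ = U (f j) j * ∑ i, U i j := by rw [Finset.mul_sum]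
      _ = U (f j) j := by rw [(hU j).2, mul_one]
  have hf1 : ∀ j, 1 - t ≤ U (f j) j := fun j => by
    have := hdiag j; have := hfs j; linarith
  have ht381 : t ≤ 0.381 := hKη
  -- f is injective
  have hinj : Function.Injective f := by
    intro j k hjk
    by_contra hne
    have h1 : U (f j) j * U (f j) k ≤ ∑ i, U i j * U i k := by
      have := Finset.single_le_sum
        (f := fun i => U i j * U i k)
        (fun i _ => mul_nonneg ((hU j).1 i) ((hU k).1 i)) (Finset.mem_univ (f j))
      simpa [hjk] using this
    have h2 : (∑ i, U i j * U i k) ≤ t := hoff j k hne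
    have h3 : (1 - t) * (1 - t) ≤ U (f j) j * U (f j) k := by
      have hj := hf1 j
      have hk := hf1 k
      have h1t : (0:ℝ) ≤ 1 - t := by linarith
      have := hf1 k; rw [← hjk] at this
      exact mul_le_mul hj this h1t (le_trans h1t hj)
    nlinarith [mul_nonneg (sub_nonneg.mpr ht381) (show (0:ℝ) ≤ 2.619 - t by linarith)]
  have hbij : Function.Bijective f := Finite.injective_iff_bijective.mp hinj
  refine ⟨Equiv.ofBijective f hbij, ?_⟩
  set σ := Equiv.ofBijective f hbij with hσ
  have hσa : ∀ i, σ i = f i := fun i => rfl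
  -- entry of permMat σ * U
  have hentry : ∀ i j, (permMat σ * U - 1) i j
      = U (σ i) j - if i = j then 1 else 0 := by
    intro i j
    simp [permMat, Matrix.sub_apply, Matrix.mul_apply, Matrix.one_apply]
  -- column sum bound
  have hcol : ∀ j, ∑ i, ((permMat σ * U - 1) i j) ^ 2 ≤ t := by
    intro j
    have hre : ∑ i, ((permMat σ * U - 1) i j) ^ 2
        = ∑ r, (U r j - if r = σ j then 1 else 0) ^ 2 := by
      rw [show (∑ r, (U r j - if r = σ j then 1 else 0) ^ 2)
          = ∑ i, (U (σ i) j - if σ i = σ j then 1 else 0) ^ 2 from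
        (Fintype.sum_bijective σ σ.bijective _ _ (fun i => rfl)).symm]
      apply Finset.sum_congr rfl
      intro i _
      rw [hentry]
      congr 1
      congr 1
      simp [σ.injective.eq_iff]
    rw [hre]
    have hexp : ∑ r, (U r j - if r = σ j then 1 else 0) ^ 2
        = s j - 2 * U (σ j) j + 1 := by
      have : ∀ r, (U r j - if r = σ j then 1 else 0) ^ 2
          = (U r j) ^ 2 - 2 * (U r j * if r = σ j then 1 else 0)
            + (if r = σ j then 1 else 0) := by
        intro r
        by_cases hr : r = σ j <;> simp [hr] <;> ring
      rw [Finset.sum_congr rfl (fun r _ => this r)]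
      rw [Finset.sum_add_distrib, Finset.sum_sub_distrib, ← Finset.mul_sum]
      simp [Finset.sum_ite_eq', hs]
    rw [hexp]
    have h1 := hfs j
    have h2 := hdiag j
    have h3 : s j ≤ U (σ j) j := by rw [hσa]; exact h1
    linarith
  -- sum over columns
  have : frobSq (permMat σ * U - 1) ≤ (K : ℝ) * t := by
    unfold frobSq
    rw [Finset.sum_comm]
    calc ∑ j, ∑ i, ((permMat σ * U - 1) i j) ^ 2
        ≤ ∑ _j : Fin K, t := Finset.sum_le_sum fun j _ => hcol j
      _ = (K : ℝ) * t := by simp [mul_comm]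
  have hKt : (K : ℝ) * t ≤ 2 * (K : ℝ) ^ 2 * η := by
    have hK0 : (0:ℝ) ≤ (K : ℝ) := Nat.cast_nonneg K
    nlinarith [mul_nonneg (mul_nonneg hK0 hK0) hη]
  linarith
end

section
/- Let K ≥ 1, N ≥ K, and let M♮ = [I_K, V♮] ∈ ℝ^{K×N} be a matrix whose first K columns form the K×K identity matrix and whose every column lies in the probability simplex Δ_K. Let M* = [U*, V*] ∈ ℝ^{K×N} be another matrix with every column in Δ_K, where U* ∈ ℝ^{K×K} consists of the first K columns. Let ε ≥ 0 and η ≥ 0 satisfy 8·K²·η ≤ 1, and suppose ‖(M*)ᵀM* − (M♮)ᵀM♮‖_F² ≤ N²·ε² and ‖(U*)ᵀU* − I_K‖_F² ≤ K²·η². Then there exists a K×K permutation matrix Π such that ‖Π·M* − M♮‖_F² ≤ 4·N²·ε² + 2·K²·(1 + 8·‖V♮‖₂²)·η, where ‖V♮‖₂ denotes the spectral norm (ℓ₂ operator norm, i.e., the largest singular value) of V♮. -/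
open Matrix
open scoped Matrix.Norms.L2Operator

/-- Spectral norm (ℓ₂ operator norm, i.e. largest singular value) of a real matrix. -/
noncomputable def specNorm {α β : Type*} [Fintype α] [Fintype β] [DecidableEq β]
    (A : Matrix α β ℝ) : ℝ :=
  ‖(Matrix.toEuclideanLin A).toContinuousLinearMap‖

/-- Membership of every column of a matrix in the probability simplex Δ_K. -/
def ColsInSimplex {K : ℕ} {β : Type*} [Fintype β] (M : Matrix (Fin K) β ℝ) : Prop :=
  ∀ j, (∀ i, 0 ≤ M i j) ∧ ∑ i, M i j = 1

namespace St11

variable {α β γ δ : Type*} [Fintype α] [Fintype β] [Fintype γ] [Fintype δ]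

lemma frobSq_nonneg (A : Matrix α β ℝ) : 0 ≤ frobSq A :=
  Finset.sum_nonneg fun _ _ => Finset.sum_nonneg fun _ _ => sq_nonneg _

/-- The (unsquared) Frobenius norm. -/
noncomputable def fn (A : Matrix α β ℝ) : ℝ := Real.sqrt (frobSq A)

lemma fn_nonneg (A : Matrix α β ℝ) : 0 ≤ fn A := Real.sqrt_nonneg _

lemma fn_sq (A : Matrix α β ℝ) : fn A ^ 2 = frobSq A := Real.sq_sqrt (frobSq_nonneg A)

lemma fn_le_of_sq_le {A : Matrix α β ℝ} {c : ℝ} (hc : 0 ≤ c) (h : frobSq A ≤ c ^ 2) :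
    fn A ≤ c := by
  rw [fn, show c = Real.sqrt (c ^ 2) by rw [Real.sqrt_sq hc]]
  exact Real.sqrt_le_sqrt h

lemma frobSq_transpose (A : Matrix α β ℝ) : frobSq Aᵀ = frobSq A := Finset.sum_comm

lemma fn_transpose (A : Matrix α β ℝ) : fn Aᵀ = fn A := by rw [fn, frobSq_transpose]; rfl

lemma frobSq_neg (A : Matrix α β ℝ) : frobSq (-A) = frobSq A := by simp [frobSq]

lemma fn_neg (A : Matrix α β ℝ) : fn (-A) = fn A := by rw [fn, frobSq_neg]; rfl

lemma entry_sq_le_frobSq (A : Matrix α β ℝ) (i : α) (j : β) : (A i j) ^ 2 ≤ frobSq A := by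
  have h1 : (A i j) ^ 2 ≤ ∑ j', (A i j') ^ 2 :=
    Finset.single_le_sum (f := fun j' => (A i j') ^ 2) (fun _ _ => sq_nonneg _)
      (Finset.mem_univ j)
  exact h1.trans (Finset.single_le_sum (f := fun i' => ∑ j', (A i' j') ^ 2)
    (fun _ _ => Finset.sum_nonneg fun _ _ => sq_nonneg _) (Finset.mem_univ i))

lemma sum_sum_eq_prod (f : α → β → ℝ) :
    ∑ i, ∑ j, f i j = ∑ p : α × β, f p.1 p.2 :=
  (Fintype.sum_prod_type (f := fun p : α × β => f p.1 p.2)).symm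

lemma inner_le_fn_mul_fn (A B : Matrix α β ℝ) :
    ∑ i, ∑ j, A i j * B i j ≤ fn A * fn B := by
  have hA : frobSq A = ∑ p : α × β, (A p.1 p.2) ^ 2 := sum_sum_eq_prod _
  have hB : frobSq B = ∑ p : α × β, (B p.1 p.2) ^ 2 := sum_sum_eq_prod _
  have hS : ∑ i, ∑ j, A i j * B i j = ∑ p : α × β, A p.1 p.2 * B p.1 p.2 :=
    sum_sum_eq_prod _
  rw [hS]
  set S := ∑ p : α × β, A p.1 p.2 * B p.1 p.2 with hSdef
  have hcs : S ^ 2 ≤ frobSq A * frobSq B := by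
    rw [hA, hB]
    exact Finset.sum_mul_sq_le_sq_mul_sq _ _ _
  calc S ≤ |S| := le_abs_self S
    _ = Real.sqrt (S ^ 2) := (Real.sqrt_sq_eq_abs S).symm
    _ ≤ Real.sqrt (frobSq A * frobSq B) := Real.sqrt_le_sqrt hcs
    _ = fn A * fn B := Real.sqrt_mul (frobSq_nonneg A) _

lemma fn_add_le (A B : Matrix α β ℝ) : fn (A + B) ≤ fn A + fn B := by
  have hexp : frobSq (A + B) = frobSq A + 2 * (∑ i, ∑ j, A i j * B i j) + frobSq B := by
    simp only [frobSq, Matrix.add_apply]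
    rw [Finset.mul_sum, ← Finset.sum_add_distrib, ← Finset.sum_add_distrib]
    congr 1; ext i
    rw [Finset.mul_sum, ← Finset.sum_add_distrib, ← Finset.sum_add_distrib]
    congr 1; ext j; ring
  apply fn_le_of_sq_le (add_nonneg (fn_nonneg A) (fn_nonneg B))
  have := inner_le_fn_mul_fn A B
  rw [hexp]
  nlinarith [fn_sq A, fn_sq B]

lemma euclid_norm_sq (x : α → ℝ) :
    ‖(WithLp.equiv 2 (α → ℝ)).symm x‖ ^ 2 = ∑ i, (x i) ^ 2 := by
  rw [EuclideanSpace.norm_eq]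
  rw [Real.sq_sqrt (Finset.sum_nonneg fun _ _ => by positivity)]
  simp [Real.norm_eq_abs, sq_abs]

lemma mulVec_sq_le [DecidableEq β] (X : Matrix α β ℝ) (x : β → ℝ) :
    ∑ i, ((X *ᵥ x) i) ^ 2 ≤ ‖X‖ ^ 2 * ∑ j, (x j) ^ 2 := by
  have h := X.l2_opNorm_mulVec ((WithLp.equiv 2 (β → ℝ)).symm x)
  have hx : ‖(WithLp.equiv 2 (β → ℝ)).symm x‖ ^ 2 = ∑ j, (x j) ^ 2 := euclid_norm_sq x
  have hXx : ‖(WithLp.equiv 2 (α → ℝ)).symm (X *ᵥ x)‖ ^ 2 = ∑ i, ((X *ᵥ x) i) ^ 2 :=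
    euclid_norm_sq _
  have h2 : ‖(WithLp.equiv 2 (α → ℝ)).symm (X *ᵥ x)‖ ≤
      ‖X‖ * ‖(WithLp.equiv 2 (β → ℝ)).symm x‖ := h
  nlinarith [norm_nonneg ((WithLp.equiv 2 (α → ℝ)).symm (X *ᵥ x)),
    norm_nonneg ((WithLp.equiv 2 (β → ℝ)).symm x), norm_nonneg X,
    mul_le_mul h2 h2 (norm_nonneg _) (mul_nonneg (norm_nonneg X) (norm_nonneg _))]

lemma frobSq_mul_le [DecidableEq β] (X : Matrix α β ℝ) (B : Matrix β γ ℝ) :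
    frobSq (X * B) ≤ ‖X‖ ^ 2 * frobSq B := by
  have hcol : ∀ j, ∑ i, ((X * B) i j) ^ 2 ≤ ‖X‖ ^ 2 * ∑ k, (B k j) ^ 2 := by
    intro j
    have : ∀ i, (X * B) i j = (X *ᵥ fun k => B k j) i := by
      intro i; simp [Matrix.mul_apply, Matrix.mulVec, dotProduct]
    simp_rw [this]
    exact mulVec_sq_le X _
  calc frobSq (X * B) = ∑ j, ∑ i, ((X * B) i j) ^ 2 := Finset.sum_comm
    _ ≤ ∑ j, ‖X‖ ^ 2 * ∑ k, (B k j) ^ 2 := Finset.sum_le_sum fun j _ => hcol j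
    _ = ‖X‖ ^ 2 * ∑ j, ∑ k, (B k j) ^ 2 := by rw [Finset.mul_sum]
    _ = ‖X‖ ^ 2 * frobSq B := by
        rw [show (∑ j, ∑ k, (B k j) ^ 2) = frobSq B from Finset.sum_comm]

lemma fn_mul_le_left [DecidableEq β] (X : Matrix α β ℝ) (B : Matrix β γ ℝ) :
    fn (X * B) ≤ ‖X‖ * fn B := by
  apply fn_le_of_sq_le (mul_nonneg (norm_nonneg X) (fn_nonneg B))
  calc frobSq (X * B) ≤ ‖X‖ ^ 2 * frobSq B := frobSq_mul_le X B
    _ = (‖X‖ * fn B) ^ 2 := by rw [← fn_sq B]; ring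

lemma specNorm_transpose [DecidableEq α] [DecidableEq β] (A : Matrix α β ℝ) : ‖Aᵀ‖ = ‖A‖ := by
  have h : Aᵀ = Aᴴ := by ext i j; simp [conjTranspose_apply]
  rw [h, l2_opNorm_conjTranspose]

lemma fn_mul_le_right [DecidableEq β] [DecidableEq γ] [DecidableEq α]
    (A : Matrix α β ℝ) (Y : Matrix β γ ℝ) :
    fn (A * Y) ≤ fn A * ‖Y‖ := by
  calc fn (A * Y) = fn ((A * Y)ᵀ) := (fn_transpose _).symm
    _ = fn (Yᵀ * Aᵀ) := by rw [Matrix.transpose_mul]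
    _ ≤ ‖Yᵀ‖ * fn Aᵀ := fn_mul_le_left _ _
    _ = fn A * ‖Y‖ := by rw [specNorm_transpose, fn_transpose]; ring

lemma mulVec_sq_le_frobSq (X : Matrix α β ℝ) (y : β → ℝ) :
    ∑ i, ((X *ᵥ y) i) ^ 2 ≤ frobSq X * ∑ j, (y j) ^ 2 := by
  have hrow : ∀ i, ((X *ᵥ y) i) ^ 2 ≤ (∑ j, (X i j) ^ 2) * ∑ j, (y j) ^ 2 := by
    intro i
    have : (X *ᵥ y) i = ∑ j, X i j * y j := rfl
    rw [this]
    exact Finset.sum_mul_sq_le_sq_mul_sq _ _ _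
  calc ∑ i, ((X *ᵥ y) i) ^ 2 ≤ ∑ i, (∑ j, (X i j) ^ 2) * ∑ j, (y j) ^ 2 :=
      Finset.sum_le_sum fun i _ => hrow i
    _ = frobSq X * ∑ j, (y j) ^ 2 := by rw [← Finset.sum_mul]; rfl

lemma specNorm_le_fn [DecidableEq β] (X : Matrix α β ℝ) : ‖X‖ ≤ fn X := by
  rw [Matrix.l2_opNorm_def]
  apply ContinuousLinearMap.opNorm_le_bound _ (fn_nonneg X)
  intro x
  have hfx : (LinearEquiv.trans (Matrix.toEuclideanLin (𝕜 := ℝ) (m := α) (n := β))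
      LinearMap.toContinuousLinearMap X) x =
      (WithLp.equiv 2 (α → ℝ)).symm (X *ᵥ (WithLp.equiv 2 (β → ℝ)) x) := rfl
  rw [hfx]
  have h1 : ‖(WithLp.equiv 2 (α → ℝ)).symm (X *ᵥ (WithLp.equiv 2 (β → ℝ)) x)‖ ^ 2 =
      ∑ i, ((X *ᵥ (WithLp.equiv 2 (β → ℝ)) x) i) ^ 2 := euclid_norm_sq _
  have h2 : ‖x‖ ^ 2 = ∑ j, (((WithLp.equiv 2 (β → ℝ)) x) j) ^ 2 := by
    rw [← euclid_norm_sq ((WithLp.equiv 2 (β → ℝ)) x)]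
    congr 1
  have h3 := mulVec_sq_le_frobSq X ((WithLp.equiv 2 (β → ℝ)) x)
  nlinarith [norm_nonneg ((WithLp.equiv 2 (α → ℝ)).symm (X *ᵥ (WithLp.equiv 2 (β → ℝ)) x)),
    norm_nonneg x, fn_nonneg X, fn_sq X,
    mul_nonneg (fn_nonneg X) (norm_nonneg x), sq_nonneg (fn X * ‖x‖)]

lemma frobSq_fromColumns (A : Matrix α β ℝ) (B : Matrix α γ ℝ) :
    frobSq (fromCols A B) = frobSq A + frobSq B := by
  simp [frobSq, Fintype.sum_sum_type, Finset.sum_add_distrib]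

lemma frobSq_fromBlocks (A : Matrix α β ℝ) (B : Matrix α δ ℝ) (C : Matrix γ β ℝ)
    (D : Matrix γ δ ℝ) :
    frobSq (fromBlocks A B C D) = frobSq A + frobSq B + frobSq C + frobSq D := by
  simp [frobSq, Fintype.sum_sum_type, Finset.sum_add_distrib]
  ring

omit [Fintype α] [Fintype β] [Fintype γ] in
lemma fromColumns_sub (A C : Matrix α β ℝ) (B D : Matrix α γ ℝ) :
    fromCols A B - fromCols C D = fromCols (A - C) (B - D) := by
  ext i j
  cases j <;> simp [fromCols]

lemma permMat_mul_apply {K : ℕ} (σ : Equiv.Perm (Fin K)) {β : Type*} [Fintype β]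
    (M : Matrix (Fin K) β ℝ) (i : Fin K) (j : β) :
    (permMat σ * M) i j = M (σ i) j := by
  rw [Matrix.mul_apply]
  rw [Finset.sum_eq_single (σ i)]
  · simp [permMat]
  · intro k _ hk; simp [permMat, hk]
  · intro h; exact absurd (Finset.mem_univ _) h

lemma permMat_transpose_mul_self {K : ℕ} (σ : Equiv.Perm (Fin K)) :
    (permMat σ)ᵀ * permMat σ = 1 := by
  ext i j
  rw [Matrix.mul_apply]
  rw [Finset.sum_eq_single (σ⁻¹ i)]
  · simp only [Matrix.transpose_apply, permMat, Matrix.of_apply, Equiv.Perm.inv_def, Equiv.apply_symm_apply]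
    by_cases h : i = j <;> simp [h, Matrix.one_apply, eq_comm]
  · intro k _ hk
    have : i ≠ σ k := by
      intro h; exact hk (by rw [h]; simp)
    simp [permMat, this]
  · intro h; exact absurd (Finset.mem_univ _) h

lemma endgame (k B2 q d b sV F1 : ℝ) (hk0 : 0 ≤ k) (hk8 : k ≤ 1/8) (hB2 : 0 ≤ B2)
    (hq0 : 0 ≤ q) (hd0 : 0 ≤ d) (hb0 : 0 ≤ b) (hs0 : 0 ≤ sV)
    (hq2 : q ^ 2 ≤ k) (hb2 : b ^ 2 ≤ B2) (hdle : d ≤ q * d + q * sV + b)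
    (hF1 : F1 ≤ k) :
    F1 + d ^ 2 ≤ 4 * B2 + 2 * k * (1 + 8 * sV ^ 2) := by
  have hq036 : q ≤ 0.36 := by nlinarith
  have h064 : 0.64 * d ≤ q * sV + b := by nlinarith
  have hrhs0 : 0 ≤ q * sV + b := add_nonneg (mul_nonneg hq0 hs0) hb0
  have hdd : 0.4096 * d ^ 2 ≤ (q * sV + b) ^ 2 := by
    nlinarith [mul_le_mul h064 h064 (by linarith) hrhs0]
  nlinarith [hdd, sq_nonneg (2 * (q * sV) - b),
    mul_le_mul_of_nonneg_right hq2 (sq_nonneg sV), mul_nonneg hk0 (sq_nonneg sV)]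

end St11

open St11

theorem stmt11 (K L : ℕ) (hK : 1 ≤ K)
    (V : Matrix (Fin K) (Fin L) ℝ)
    (Ustar : Matrix (Fin K) (Fin K) ℝ) (Vstar : Matrix (Fin K) (Fin L) ℝ)
    (hMnat : ColsInSimplex (Matrix.fromCols (1 : Matrix (Fin K) (Fin K) ℝ) V))
    (hMstar : ColsInSimplex (Matrix.fromCols Ustar Vstar))
    (ε η : ℝ) (hε : 0 ≤ ε) (hη : 0 ≤ η) (hKη : 8 * (K : ℝ) ^ 2 * η ≤ 1)
    (h1 : frobSq ((Matrix.fromCols Ustar Vstar)ᵀ * Matrix.fromCols Ustar Vstar -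
            (Matrix.fromCols (1 : Matrix (Fin K) (Fin K) ℝ) V)ᵀ *
              Matrix.fromCols (1 : Matrix (Fin K) (Fin K) ℝ) V)
          ≤ ((K : ℝ) + (L : ℝ)) ^ 2 * ε ^ 2)
    (h2 : frobSq (Ustarᵀ * Ustar - 1) ≤ (K : ℝ) ^ 2 * η ^ 2) :
    ∃ σ : Equiv.Perm (Fin K),
      frobSq (permMat σ * Matrix.fromCols Ustar Vstar -
          Matrix.fromCols (1 : Matrix (Fin K) (Fin K) ℝ) V)
        ≤ 4 * ((K : ℝ) + (L : ℝ)) ^ 2 * ε ^ 2 +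
          2 * (K : ℝ) ^ 2 * (1 + 8 * specNorm V ^ 2) * η := by
  classical
  haveI : Nonempty (Fin K) := Fin.pos_iff_nonempty.mp (by omega)
  have hKpos : (0 : ℝ) ≤ K := Nat.cast_nonneg K
  have hK1 : (1 : ℝ) ≤ K := by exact_mod_cast hK
  have hKη8 : (K : ℝ) ^ 2 * η ≤ 1 / 8 := by linarith
  have hKη1 : (K : ℝ) * η ≤ 1 / 8 := by nlinarith
  have hKη0 : 0 ≤ (K : ℝ) * η := mul_nonneg hKpos hη
  -- column facts for Ustar
  have hcol : ∀ j : Fin K, (∀ i, 0 ≤ Ustar i j) ∧ ∑ i, Ustar i j = 1 := by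
    intro j
    have h := hMstar (Sum.inl j)
    simpa [Matrix.fromCols] using h
  -- choose the max entry of each column
  have hex : ∀ j : Fin K, ∃ i, ∀ i', Ustar i' j ≤ Ustar i j := by
    intro j
    obtain ⟨i, hi⟩ := Finite.exists_max (fun i => Ustar i j)
    exact ⟨i, hi⟩
  choose f hf using hex
  set s : Fin K → ℝ := fun j => ∑ i, (Ustar i j) ^ 2 with hs_def
  have hs_le_one : ∀ j, s j ≤ 1 := by
    intro j
    have h := Finset.sum_sq_le_sq_sum_of_nonneg (f := fun i => Ustar i j)
      (s := Finset.univ) (fun i _ => (hcol j).1 i)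
    rw [(hcol j).2] at h
    simpa [hs_def] using h
  have hdiag : ∀ j, (Ustarᵀ * Ustar - 1) j j = s j - 1 := by
    intro j
    simp [Matrix.sub_apply, Matrix.mul_apply, Matrix.one_apply, hs_def, sq]
  have hs_ge : ∀ j, 1 - s j ≤ (K : ℝ) * η := by
    intro j
    have h := (entry_sq_le_frobSq (Ustarᵀ * Ustar - 1) j j).trans h2
    rw [hdiag j] at h
    nlinarith [hs_le_one j]
  have hmax_ge_s : ∀ j, s j ≤ Ustar (f j) j := by
    intro j
    have hterm : ∀ i, (Ustar i j) ^ 2 ≤ Ustar (f j) j * Ustar i j := by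
      intro i
      have := mul_le_mul_of_nonneg_right (hf j i) ((hcol j).1 i)
      nlinarith [this]
    calc s j ≤ ∑ i, Ustar (f j) j * Ustar i j := Finset.sum_le_sum fun i _ => hterm i
      _ = Ustar (f j) j := by rw [← Finset.mul_sum, (hcol j).2, mul_one]
  have hmax_ge : ∀ j, 1 - (K : ℝ) * η ≤ Ustar (f j) j := fun j => by
    linarith [hs_ge j, hmax_ge_s j]
  -- f is injective
  have hinj : Function.Injective f := by
    intro j1 j2 hj
    by_contra hne
    have hoffeq : (Ustarᵀ * Ustar - 1) j1 j2 = ∑ k, Ustar k j1 * Ustar k j2 := by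
      simp [Matrix.sub_apply, Matrix.mul_apply, Matrix.one_apply, hne]
    have hoff : (∑ k, Ustar k j1 * Ustar k j2) ^ 2 ≤ (K : ℝ) ^ 2 * η ^ 2 := by
      rw [← hoffeq]
      exact (entry_sq_le_frobSq _ j1 j2).trans h2
    have hlow : Ustar (f j1) j1 * Ustar (f j1) j2 ≤ ∑ k, Ustar k j1 * Ustar k j2 :=
      Finset.single_le_sum (f := fun k => Ustar k j1 * Ustar k j2)
        (fun k _ => mul_nonneg ((hcol j1).1 k) ((hcol j2).1 k)) (Finset.mem_univ _)
    have h1' : 1 - (K : ℝ) * η ≤ Ustar (f j1) j1 := hmax_ge j1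
    have h2' : 1 - (K : ℝ) * η ≤ Ustar (f j1) j2 := by rw [hj]; exact hmax_ge j2
    have hprod : (1 - (K : ℝ) * η) * (1 - (K : ℝ) * η) ≤
        Ustar (f j1) j1 * Ustar (f j1) j2 := by
      apply mul_le_mul h1' h2' (by linarith) (by linarith [(hcol j1).1 (f j1)])
    nlinarith [hoff, hlow, hprod, sq_nonneg (∑ k, Ustar k j1 * Ustar k j2 - (K : ℝ) * η)]
  have hbij : Function.Bijective f := Finite.injective_iff_bijective.mp hinj
  set σ : Equiv.Perm (Fin K) := Equiv.ofBijective f hbij with hσ_def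
  have hσ : ∀ j, σ j = f j := fun j => rfl
  refine ⟨σ, ?_⟩
  set P := permMat σ with hP_def
  set Uh := P * Ustar with hUh_def
  set Wh := P * Vstar with hWh_def
  -- split the goal
  have hsplit : P * Matrix.fromCols Ustar Vstar -
      Matrix.fromCols (1 : Matrix (Fin K) (Fin K) ℝ) V =
      Matrix.fromCols (Uh - 1) (Wh - V) := by
    rw [Matrix.mul_fromCols, fromColumns_sub]
  rw [hsplit, frobSq_fromColumns]
  -- block 1 bound
  have hcolbd : ∀ j, ∑ i, ((Uh - (1 : Matrix (Fin K) (Fin K) ℝ)) i j) ^ 2 ≤ (K : ℝ) * η := by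
    intro j
    have happ : ∀ i, (Uh - (1 : Matrix (Fin K) (Fin K) ℝ)) i j =
        Ustar (σ i) j - (if i = j then (1 : ℝ) else 0) := by
      intro i
      rw [Matrix.sub_apply, hUh_def, permMat_mul_apply, Matrix.one_apply]
    have hexp : ∑ i, ((Uh - (1 : Matrix (Fin K) (Fin K) ℝ)) i j) ^ 2 =
        (∑ i, (Ustar (σ i) j) ^ 2) - 2 * Ustar (σ j) j + 1 := by
      have hterm : ∀ i, ((Uh - (1 : Matrix (Fin K) (Fin K) ℝ)) i j) ^ 2 =
          (Ustar (σ i) j) ^ 2 - 2 * (if i = j then Ustar (σ i) j else 0) +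
            (if i = j then (1 : ℝ) else 0) := by
        intro i
        rw [happ i]
        by_cases h : i = j <;> simp [h] <;> ring
      simp_rw [hterm]
      rw [Finset.sum_add_distrib, Finset.sum_sub_distrib]
      simp [Finset.sum_ite_eq' Finset.univ j]
    have hreindex : ∑ i, (Ustar (σ i) j) ^ 2 = s j :=
      Equiv.sum_comp σ (fun k => (Ustar k j) ^ 2)
    rw [hexp, hreindex]
    have h1' := hmax_ge_s j
    have h2' := hs_ge j
    have h3' : Ustar (σ j) j = Ustar (f j) j := by rw [hσ j]
    rw [h3']
    linarith
  have hblock1 : frobSq (Uh - 1) ≤ (K : ℝ) ^ 2 * η := by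
    calc frobSq (Uh - 1) = ∑ j, ∑ i, ((Uh - (1 : Matrix (Fin K) (Fin K) ℝ)) i j) ^ 2 :=
        Finset.sum_comm
      _ ≤ ∑ _j : Fin K, (K : ℝ) * η := Finset.sum_le_sum fun j _ => hcolbd j
      _ = (K : ℝ) ^ 2 * η := by
          rw [Finset.sum_const, Finset.card_univ, Fintype.card_fin, nsmul_eq_mul]
          ring
  -- E2 bound from h1
  have hE2 : frobSq (Ustarᵀ * Vstar - V) ≤ ((K : ℝ) + (L : ℝ)) ^ 2 * ε ^ 2 := by
    have hdecomp : (Matrix.fromCols Ustar Vstar)ᵀ * Matrix.fromCols Ustar Vstar -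
        (Matrix.fromCols (1 : Matrix (Fin K) (Fin K) ℝ) V)ᵀ *
          Matrix.fromCols (1 : Matrix (Fin K) (Fin K) ℝ) V =
        Matrix.fromBlocks (Ustarᵀ * Ustar - 1) (Ustarᵀ * Vstar - V)
          (Vstarᵀ * Ustar - Vᵀ) (Vstarᵀ * Vstar - Vᵀ * V) := by
      rw [Matrix.transpose_fromCols, Matrix.transpose_fromCols,
        Matrix.fromRows_mul_fromCols, Matrix.fromRows_mul_fromCols]
      rw [Matrix.transpose_one, Matrix.one_mul, Matrix.one_mul, Matrix.mul_one]
      ext i j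
      cases i <;> cases j <;> simp [Matrix.fromBlocks]
    rw [hdecomp, frobSq_fromBlocks] at h1
    linarith [frobSq_nonneg (Ustarᵀ * Ustar - 1), frobSq_nonneg (Vstarᵀ * Ustar - Vᵀ),
      frobSq_nonneg (Vstarᵀ * Vstar - Vᵀ * V)]
  -- the key identity
  have hUhWh : Uhᵀ * Wh = Ustarᵀ * Vstar := by
    rw [hUh_def, hWh_def, Matrix.transpose_mul, Matrix.mul_assoc,
      ← Matrix.mul_assoc Pᵀ, permMat_transpose_mul_self, Matrix.one_mul]
  have hid : Wh - V = ((1 : Matrix (Fin K) (Fin K) ℝ) - Uh)ᵀ * (Wh - V) +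
      ((1 : Matrix (Fin K) (Fin K) ℝ) - Uh)ᵀ * V + (Ustarᵀ * Vstar - V) := by
    have hexpand : ((1 : Matrix (Fin K) (Fin K) ℝ) - Uh)ᵀ * (Wh - V) +
        ((1 : Matrix (Fin K) (Fin K) ℝ) - Uh)ᵀ * V = Wh - Uhᵀ * Wh := by
      rw [← Matrix.mul_add, sub_add_cancel, Matrix.transpose_sub, Matrix.transpose_one,
        Matrix.sub_mul, Matrix.one_mul]
    rw [hexpand, hUhWh]
    abel
  -- norm bounds
  set q := fn (Uh - 1) with hq_def
  set d := fn (Wh - V) with hd_def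
  set b := fn (Ustarᵀ * Vstar - V) with hb_def
  have hfn1 : fn ((1 : Matrix (Fin K) (Fin K) ℝ) - Uh) = q := by
    rw [show (1 : Matrix (Fin K) (Fin K) ℝ) - Uh = -(Uh - 1) from (neg_sub _ _).symm, fn_neg,
      hq_def]
  have hqd : fn (((1 : Matrix (Fin K) (Fin K) ℝ) - Uh)ᵀ * (Wh - V)) ≤ q * d := by
    calc fn (((1 : Matrix (Fin K) (Fin K) ℝ) - Uh)ᵀ * (Wh - V)) ≤
        ‖((1 : Matrix (Fin K) (Fin K) ℝ) - Uh)ᵀ‖ * d := fn_mul_le_left _ _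
      _ ≤ fn (((1 : Matrix (Fin K) (Fin K) ℝ) - Uh)ᵀ) * d :=
        mul_le_mul_of_nonneg_right (specNorm_le_fn _) (fn_nonneg _)
      _ = q * d := by rw [fn_transpose, hfn1]
  have hqs : fn (((1 : Matrix (Fin K) (Fin K) ℝ) - Uh)ᵀ * V) ≤ q * ‖V‖ := by
    calc fn (((1 : Matrix (Fin K) (Fin K) ℝ) - Uh)ᵀ * V) ≤
        fn (((1 : Matrix (Fin K) (Fin K) ℝ) - Uh)ᵀ) * ‖V‖ := fn_mul_le_right _ _
      _ = q * ‖V‖ := by rw [fn_transpose, hfn1]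
  have hd_le : d ≤ q * d + q * ‖V‖ + b := by
    have hstart : d = fn (((1 : Matrix (Fin K) (Fin K) ℝ) - Uh)ᵀ * (Wh - V) +
        ((1 : Matrix (Fin K) (Fin K) ℝ) - Uh)ᵀ * V + (Ustarᵀ * Vstar - V)) := by
      rw [hd_def, ← hid]
    rw [hstart]
    have t1 := fn_add_le (((1 : Matrix (Fin K) (Fin K) ℝ) - Uh)ᵀ * (Wh - V) +
        ((1 : Matrix (Fin K) (Fin K) ℝ) - Uh)ᵀ * V) (Ustarᵀ * Vstar - V)
    have t2 := fn_add_le (((1 : Matrix (Fin K) (Fin K) ℝ) - Uh)ᵀ * (Wh - V))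
        (((1 : Matrix (Fin K) (Fin K) ℝ) - Uh)ᵀ * V)
    rw [← hstart]
    linarith [hqd, hqs, t1, t2]
  -- numeric endgame
  have hq2 : q ^ 2 ≤ (K : ℝ) ^ 2 * η := by rw [hq_def, fn_sq]; exact hblock1
  have hb2 : b ^ 2 ≤ ((K : ℝ) + (L : ℝ)) ^ 2 * ε ^ 2 := by
    rw [hb_def, fn_sq]; exact hE2
  have hq0 : 0 ≤ q := fn_nonneg _
  have hd0 : 0 ≤ d := fn_nonneg _
  have hb0 : 0 ≤ b := fn_nonneg _
  have hV0 : 0 ≤ ‖V‖ := norm_nonneg _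
  have hspec : specNorm V = ‖V‖ := rfl
  rw [hspec]
  have hfrobd : frobSq (Wh - V) = d ^ 2 := (fn_sq _).symm
  rw [hfrobd]
  have hk0 : 0 ≤ (K : ℝ) ^ 2 * η := by positivity
  have hKL0 : (0 : ℝ) ≤ ((K : ℝ) + (L : ℝ)) ^ 2 * ε ^ 2 := by positivity
  have key := endgame ((K : ℝ) ^ 2 * η) (((K : ℝ) + (L : ℝ)) ^ 2 * ε ^ 2) q d b ‖V‖
    (frobSq (Uh - 1)) hk0 hKη8 hKL0 hq0 hd0 hb0 hV0 hq2 hb2 hd_le hblock1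
  have hring : 4 * (((K : ℝ) + (L : ℝ)) ^ 2 * ε ^ 2) +
      2 * ((K : ℝ) ^ 2 * η) * (1 + 8 * ‖V‖ ^ 2) =
      4 * ((K : ℝ) + (L : ℝ)) ^ 2 * ε ^ 2 + 2 * (K : ℝ) ^ 2 * (1 + 8 * ‖V‖ ^ 2) * η := by
    ring
  linarith [key]
end

section
/- Let K ≥ 1 and define softmax : ℝ^K → ℝ^K by [softmax(x)]_k = exp(x_k) / Σ_{ℓ=1}^K exp(x_ℓ). Then softmax is 1-Lipschitz with respect to the Euclidean norm: for all x, y ∈ ℝ^K, ‖softmax(x) − softmax(y)‖ ≤ ‖x − y‖. -/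
noncomputable def softmax {K : ℕ} (x : Fin K → ℝ) : Fin K → ℝ :=
  fun k => Real.exp (x k) / ∑ l, Real.exp (x l)

section aux
variable {K : ℕ}

lemma Zpos [Nonempty (Fin K)] (x : Fin K → ℝ) : 0 < ∑ l, Real.exp (x l) :=
  Finset.sum_pos (fun l _ => Real.exp_pos _) Finset.univ_nonempty

lemma softmax_nonneg [Nonempty (Fin K)] (x : Fin K → ℝ) (k : Fin K) : 0 ≤ softmax x k :=
  div_nonneg (Real.exp_pos _).le (Zpos x).le

lemma softmax_sum [Nonempty (Fin K)] (x : Fin K → ℝ) : ∑ k, softmax x k = 1 := by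
  simp only [softmax]
  rw [← Finset.sum_div, div_self (Zpos x).ne']

lemma softmax_le_one [Nonempty (Fin K)] (x : Fin K → ℝ) (k : Fin K) : softmax x k ≤ 1 := by
  have := softmax_sum x
  have h : softmax x k ≤ ∑ l, softmax x l :=
    Finset.single_le_sum (fun l _ => softmax_nonneg x l) (Finset.mem_univ k)
  linarith

/-- Derivative of the k-th coordinate of softmax, as a CLM on the plain pi type. -/
noncomputable def smL (x : Fin K → ℝ) (k : Fin K) : (Fin K → ℝ) →L[ℝ] ℝ :=
  softmax x k • (ContinuousLinearMap.proj k
    - ∑ l, softmax x l • (ContinuousLinearMap.proj l : (Fin K → ℝ) →L[ℝ] ℝ))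

lemma smL_apply (x : Fin K → ℝ) (k : Fin K) (v : Fin K → ℝ) :
    smL x k v = softmax x k * (v k - ∑ l, softmax x l * v l) := by
  simp [smL, ContinuousLinearMap.sum_apply]

lemma hasFDerivAt_coord [Nonempty (Fin K)] (x : Fin K → ℝ) (k : Fin K) :
    HasFDerivAt (fun z : Fin K → ℝ => softmax z k) (smL x k) x := by
  set Z : (Fin K → ℝ) → ℝ := fun z => ∑ l, Real.exp (z l) with hZdef
  have hZne : Z x ≠ 0 := (Zpos x).ne'
  have hc : HasFDerivAt (fun z : Fin K → ℝ => Real.exp (z k))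
      (Real.exp (x k) • (ContinuousLinearMap.proj k : (Fin K → ℝ) →L[ℝ] ℝ)) x :=
    (ContinuousLinearMap.proj k : (Fin K → ℝ) →L[ℝ] ℝ).hasFDerivAt.exp
  have hZ : HasFDerivAt Z
      (∑ l, Real.exp (x l) • (ContinuousLinearMap.proj l : (Fin K → ℝ) →L[ℝ] ℝ)) x := by
    exact HasFDerivAt.fun_sum fun l _ =>
      (ContinuousLinearMap.proj l : (Fin K → ℝ) →L[ℝ] ℝ).hasFDerivAt.exp
  have hinv : HasFDerivAt (fun z => (Z z)⁻¹)
      ((-(Z x ^ 2)⁻¹) • ∑ l, Real.exp (x l) • (ContinuousLinearMap.proj l : (Fin K → ℝ) →L[ℝ] ℝ)) x :=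
    (hasDerivAt_inv hZne).comp_hasFDerivAt x hZ
  have hmul := hc.fun_mul hinv
  have heq : (fun z : Fin K → ℝ => Real.exp (z k) * (Z z)⁻¹)
      = fun z : Fin K → ℝ => softmax z k := by
    funext z; simp [softmax, div_eq_mul_inv, hZdef]
  rw [heq] at hmul
  refine hmul.congr_fderiv ?_
  ext v
  simp only [smL_apply, ContinuousLinearMap.add_apply, ContinuousLinearMap.smul_apply,
    ContinuousLinearMap.sum_apply, ContinuousLinearMap.proj_apply, smul_eq_mul, softmax, hZdef]
  have hS : (∑ l, Real.exp (x l)) ≠ 0 := (Zpos x).ne'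
  have hsum : ∑ i, (Real.exp (x i) / ∑ l, Real.exp (x l)) * v i
      = (∑ l, Real.exp (x l))⁻¹ * ∑ i, Real.exp (x i) * v i := by
    rw [Finset.mul_sum]; exact Finset.sum_congr rfl fun i _ => by ring
  rw [hsum]
  field_simp
  ring

/-- softmax on Euclidean space. -/
noncomputable def smE {K : ℕ} (z : EuclideanSpace ℝ (Fin K)) : EuclideanSpace ℝ (Fin K) :=
  (WithLp.equiv 2 (Fin K → ℝ)).symm (softmax ((WithLp.equiv 2 (Fin K → ℝ)) z))

noncomputable def smDeriv {K : ℕ} (x : Fin K → ℝ) :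
    EuclideanSpace ℝ (Fin K) →L[ℝ] EuclideanSpace ℝ (Fin K) :=
  ((EuclideanSpace.equiv (Fin K) ℝ).symm : (Fin K → ℝ) →L[ℝ] EuclideanSpace ℝ (Fin K)).comp
    ((ContinuousLinearMap.pi fun k => smL x k).comp
      ((EuclideanSpace.equiv (Fin K) ℝ : EuclideanSpace ℝ (Fin K) →L[ℝ] (Fin K → ℝ))))

lemma smDeriv_apply {K : ℕ} (x : Fin K → ℝ) (v : EuclideanSpace ℝ (Fin K)) (k : Fin K) :
    smDeriv x v k = softmax x k * (v k - ∑ l, softmax x l * v l) := by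
  simp [smDeriv, smL_apply]

lemma hasFDerivAt_smE {K : ℕ} [Nonempty (Fin K)] (z : EuclideanSpace ℝ (Fin K)) :
    HasFDerivAt smE (smDeriv ((WithLp.equiv 2 (Fin K → ℝ)) z)) z := by
  set e := EuclideanSpace.equiv (Fin K) ℝ
  have h1 : HasFDerivAt (softmax (K := K)) (ContinuousLinearMap.pi fun k =>
      smL ((WithLp.equiv 2 (Fin K → ℝ)) z) k) ((WithLp.equiv 2 (Fin K → ℝ)) z) :=
    hasFDerivAt_pi.2 fun k => hasFDerivAt_coord _ k
  have h2 : HasFDerivAt (fun w : EuclideanSpace ℝ (Fin K) => softmax (e w))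
      ((ContinuousLinearMap.pi fun k => smL ((WithLp.equiv 2 (Fin K → ℝ)) z) k).comp
        (e : EuclideanSpace ℝ (Fin K) →L[ℝ] (Fin K → ℝ))) z :=
    h1.comp z (e.toContinuousLinearMap.hasFDerivAt)
  exact (e.symm.toContinuousLinearMap.hasFDerivAt.comp z h2 : _)

lemma key_sum {K : ℕ} [Nonempty (Fin K)] (x : Fin K → ℝ) (v : Fin K → ℝ) :
    ∑ k, (softmax x k * (v k - ∑ l, softmax x l * v l))^2 ≤ ∑ k, (v k)^2 := by
  set s := softmax x with hs
  set t := ∑ l, s l * v l with ht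
  have hs0 : ∀ k, 0 ≤ s k := softmax_nonneg x
  have hs1 : ∀ k, s k ≤ 1 := softmax_le_one x
  have hsum : ∑ k, s k = 1 := softmax_sum x
  have step1 : ∑ k, (s k * (v k - t))^2 ≤ ∑ k, s k * (v k - t)^2 := by
    refine Finset.sum_le_sum fun k _ => ?_
    rw [mul_pow]
    have h : s k ^ 2 ≤ s k := by nlinarith [hs0 k, hs1 k]
    exact mul_le_mul_of_nonneg_right h (sq_nonneg _)
  have step2 : ∑ k, s k * (v k - t)^2 = (∑ k, s k * v k ^ 2) - t^2 := by
    have h : ∀ k, s k * (v k - t)^2 = s k * v k^2 - 2*t*(s k * v k) + t^2 * s k :=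
      fun k => by ring
    rw [Finset.sum_congr rfl fun k _ => h k, Finset.sum_add_distrib, Finset.sum_sub_distrib,
      ← Finset.mul_sum, ← Finset.mul_sum, ← ht, hsum]
    ring
  have step3 : ∑ k, s k * v k^2 ≤ ∑ k, v k^2 :=
    Finset.sum_le_sum fun k _ => by nlinarith [hs0 k, hs1 k, sq_nonneg (v k)]
  nlinarith [sq_nonneg t]

lemma smDeriv_opNorm {K : ℕ} [Nonempty (Fin K)] (x : Fin K → ℝ) : ‖smDeriv x‖ ≤ 1 := by
  refine ContinuousLinearMap.opNorm_le_bound _ zero_le_one fun v => ?_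
  rw [one_mul, EuclideanSpace.norm_eq, EuclideanSpace.norm_eq]
  apply Real.sqrt_le_sqrt
  calc ∑ k, ‖smDeriv x v k‖^2
      = ∑ k, (softmax x k * (v k - ∑ l, softmax x l * v l))^2 :=
        Finset.sum_congr rfl fun k _ => by rw [smDeriv_apply, Real.norm_eq_abs, sq_abs]
    _ ≤ ∑ k, (v k)^2 := key_sum x v
    _ = ∑ k, ‖v k‖^2 := by simp [Real.norm_eq_abs, sq_abs]

theorem stmt15 (K : ℕ) (hK : 1 ≤ K) (x y : Fin K → ℝ) :
    Real.sqrt (∑ k, (softmax x k - softmax y k) ^ 2)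
      ≤ Real.sqrt (∑ k, (x k - y k) ^ 2) := by
  haveI : Nonempty (Fin K) := ⟨⟨0, hK⟩⟩
  set x' : EuclideanSpace ℝ (Fin K) := (WithLp.equiv 2 (Fin K → ℝ)).symm x with hx'
  set y' : EuclideanSpace ℝ (Fin K) := (WithLp.equiv 2 (Fin K → ℝ)).symm y with hy'
  have key : ‖smE x' - smE y'‖ ≤ 1 * ‖x' - y'‖ :=
    convex_univ.norm_image_sub_le_of_norm_hasFDerivWithin_le
      (fun z _ => (hasFDerivAt_smE z).hasFDerivWithinAt)
      (fun z _ => smDeriv_opNorm _) (Set.mem_univ _) (Set.mem_univ _)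
  rw [one_mul, EuclideanSpace.norm_eq, EuclideanSpace.norm_eq] at key
  have e1 : ∑ k, ‖(smE x' - smE y') k‖^2 = ∑ k, (softmax x k - softmax y k)^2 :=
    Finset.sum_congr rfl fun k _ => by
      rw [Real.norm_eq_abs, sq_abs]; rfl
  have e2 : ∑ k, ‖(x' - y') k‖^2 = ∑ k, (x k - y k)^2 :=
    Finset.sum_congr rfl fun k _ => by
      rw [Real.norm_eq_abs, sq_abs]; rfl
  rw [e1, e2] at key
  exact key
end aux
end

section
/- Let K, L ≥ 1, let U ∈ ℝ^{K×K}, V, W ∈ ℝ^{K×L}, and let Π be a K×K permutation matrix. Let a ≥ 0 and 0 ≤ b < 1 be such that ‖UᵀV − W‖_F ≤ a and ‖Π·U − I_K‖_F ≤ b. Then ‖Π·V − W‖_F ≤ (a + ‖W‖₂·b) / (1 − b), where ‖W‖₂ denotes the spectral norm (ℓ₂ operator norm, i.e., the largest singular value) of W. -/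
open Matrix

/-- Frobenius norm of a real matrix. -/
noncomputable def frobNorm {α β : Type*} [Fintype α] [Fintype β] (A : Matrix α β ℝ) : ℝ :=
  Real.sqrt (∑ i, ∑ j, (A i j) ^ 2)

section Helpers

open scoped Matrix.Norms.L2Operator

variable {α β γ : Type*} [Fintype α] [Fintype β] [Fintype γ]

lemma specNorm_eq [DecidableEq β] (A : Matrix α β ℝ) : specNorm A = ‖A‖ := rfl

lemma specNorm_nonneg [DecidableEq β] (A : Matrix α β ℝ) : 0 ≤ specNorm A :=
  norm_nonneg _

lemma frobNorm_nonneg (A : Matrix α β ℝ) : 0 ≤ frobNorm A := Real.sqrt_nonneg _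

lemma frobNorm_transpose (A : Matrix α β ℝ) : frobNorm Aᵀ = frobNorm A := by
  unfold frobNorm
  rw [Finset.sum_comm]
  rfl

lemma specNorm_transpose [DecidableEq α] [DecidableEq β] (A : Matrix α β ℝ) :
    specNorm Aᵀ = specNorm A := by
  rw [specNorm_eq, specNorm_eq]
  have h : Aᵀ = Aᴴ := by
    ext i j
    simp [Matrix.conjTranspose_apply]
  rw [h]
  exact Matrix.l2_opNorm_conjTranspose A

lemma frobNorm_triangle (A B : Matrix α β ℝ) :
    frobNorm (A + B) ≤ frobNorm A + frobNorm B := by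
  have key : ∀ M : Matrix α β ℝ,
      frobNorm M = ‖((WithLp.equiv 2 (α × β → ℝ)).symm fun p => M p.1 p.2)‖ := by
    intro M
    rw [EuclideanSpace.norm_eq]
    unfold frobNorm
    congr 1
    rw [Fintype.sum_prod_type]
    refine Finset.sum_congr rfl fun i _ => Finset.sum_congr rfl fun j _ => ?_
    rw [Real.norm_eq_abs, sq_abs]
    rfl
  rw [key, key, key]
  have : ((WithLp.equiv 2 (α × β → ℝ)).symm fun p => (A + B) p.1 p.2) =
      ((WithLp.equiv 2 (α × β → ℝ)).symm fun p => A p.1 p.2) +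
      ((WithLp.equiv 2 (α × β → ℝ)).symm fun p => B p.1 p.2) := rfl
  rw [this]
  exact norm_add_le _ _

lemma frobNorm_sq (A : Matrix α β ℝ) : frobNorm A ^ 2 = ∑ i, ∑ j, (A i j) ^ 2 :=
  Real.sq_sqrt (Finset.sum_nonneg fun _ _ => Finset.sum_nonneg fun _ _ => sq_nonneg _)

/-- ‖A·B‖_F ≤ ‖A‖₂ ‖B‖_F -/
lemma frobNorm_mul_le_spec_mul_frob [DecidableEq β] (A : Matrix α β ℝ) (B : Matrix β γ ℝ) :
    frobNorm (A * B) ≤ specNorm A * frobNorm B := by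
  have h1 : frobNorm (A * B) ^ 2 ≤ (specNorm A * frobNorm B) ^ 2 := by
    have hswap : frobNorm (A * B) ^ 2 = ∑ j, ∑ i, ((A * B) i j) ^ 2 := by
      rw [frobNorm_sq]; exact Finset.sum_comm
    have hBsq : frobNorm B ^ 2 = ∑ j, ∑ k, (B k j) ^ 2 := by
      rw [frobNorm_sq]; exact Finset.sum_comm
    rw [hswap, mul_pow, hBsq, Finset.mul_sum]
    refine Finset.sum_le_sum fun j _ => ?_
    -- column j of B as a Euclidean vector
    set c : EuclideanSpace ℝ β := (WithLp.equiv 2 (β → ℝ)).symm (fun k => B k j) with hc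
    have hAc : ‖(EuclideanSpace.equiv α ℝ).symm (A *ᵥ fun k => B k j)‖ ≤ specNorm A * ‖c‖ := by
      rw [specNorm_eq]
      exact Matrix.l2_opNorm_mulVec A c
    have hnorm : ‖(EuclideanSpace.equiv α ℝ).symm (A *ᵥ fun k => B k j)‖ ^ 2 =
        ∑ i, ((A * B) i j) ^ 2 := by
      rw [EuclideanSpace.norm_eq, Real.sq_sqrt (Finset.sum_nonneg fun _ _ => sq_nonneg _)]
      refine Finset.sum_congr rfl fun i _ => ?_
      rw [Real.norm_eq_abs, sq_abs]
      rfl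
    have hcn : ‖c‖ ^ 2 = ∑ k, (B k j) ^ 2 := by
      rw [EuclideanSpace.norm_eq, Real.sq_sqrt (Finset.sum_nonneg fun _ _ => sq_nonneg _)]
      refine Finset.sum_congr rfl fun k _ => ?_
      rw [Real.norm_eq_abs, sq_abs]
      rfl
    calc ∑ i, ((A * B) i j) ^ 2
        = ‖(EuclideanSpace.equiv α ℝ).symm (A *ᵥ fun k => B k j)‖ ^ 2 := hnorm.symm
      _ ≤ (specNorm A * ‖c‖) ^ 2 := by
          apply pow_le_pow_left₀ (norm_nonneg _) hAc
      _ = specNorm A ^ 2 * ∑ k, (B k j) ^ 2 := by rw [mul_pow, hcn]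
  have h2 : 0 ≤ specNorm A * frobNorm B :=
    mul_nonneg (specNorm_nonneg A) (frobNorm_nonneg B)
  nlinarith [frobNorm_nonneg (A * B)]

/-- ‖A‖₂ ≤ ‖A‖_F -/
lemma specNorm_le_frobNorm [DecidableEq β] (A : Matrix α β ℝ) :
    specNorm A ≤ frobNorm A := by
  unfold specNorm
  refine ContinuousLinearMap.opNorm_le_bound _ (frobNorm_nonneg A) fun x => ?_
  have hx : ‖x‖ = Real.sqrt (∑ j, (x j) ^ 2) := by
    rw [EuclideanSpace.norm_eq]
    congr 1
    refine Finset.sum_congr rfl fun j _ => ?_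
    rw [Real.norm_eq_abs, sq_abs]
  have happ : ‖(Matrix.toEuclideanLin A).toContinuousLinearMap x‖ =
      Real.sqrt (∑ i, (∑ j, A i j * x j) ^ 2) := by
    rw [EuclideanSpace.norm_eq]
    congr 1
    refine Finset.sum_congr rfl fun i _ => ?_
    rw [Real.norm_eq_abs, sq_abs]
    rfl
  rw [happ, hx]
  unfold frobNorm
  rw [← Real.sqrt_mul (Finset.sum_nonneg fun i _ => Finset.sum_nonneg fun j _ => sq_nonneg (A i j))]
  refine Real.sqrt_le_sqrt ?_
  calc ∑ i, (∑ j, A i j * x j) ^ 2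
      ≤ ∑ i, (∑ j, (A i j) ^ 2) * ∑ j, (x j) ^ 2 :=
        Finset.sum_le_sum fun i _ => Finset.sum_mul_sq_le_sq_mul_sq _ _ _
    _ = (∑ i, ∑ j, (A i j) ^ 2) * ∑ j, (x j) ^ 2 := by rw [Finset.sum_mul]

lemma permMat_transpose_mul {K : ℕ} (σ : Equiv.Perm (Fin K)) :
    (permMat σ)ᵀ * permMat σ = 1 := by
  ext i j
  simp only [Matrix.mul_apply, Matrix.transpose_apply, permMat, Matrix.of_apply]
  rw [← Equiv.sum_comp σ.symm (fun k => (if i = σ k then (1:ℝ) else 0) * if j = σ k then 1 else 0)]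
  simp [Matrix.one_apply, Finset.sum_ite_eq', eq_comm]

end Helpers

theorem stmt18 (K L : ℕ) (hK : 1 ≤ K) (hL : 1 ≤ L)
    (U : Matrix (Fin K) (Fin K) ℝ) (V W : Matrix (Fin K) (Fin L) ℝ)
    (Pi : Matrix (Fin K) (Fin K) ℝ) (hPi : ∃ σ : Equiv.Perm (Fin K), Pi = permMat σ)
    (a b : ℝ) (ha : 0 ≤ a) (hb0 : 0 ≤ b) (hb1 : b < 1)
    (h1 : frobNorm (Uᵀ * V - W) ≤ a)
    (h2 : frobNorm (Pi * U - 1) ≤ b) :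
    frobNorm (Pi * V - W) ≤ (a + specNorm W * b) / (1 - b) := by
  obtain ⟨σ, rfl⟩ := hPi
  set Pi := permMat σ
  have hPP : Piᵀ * Pi = 1 := permMat_transpose_mul σ
  set E : Matrix (Fin K) (Fin K) ℝ := Pi * U - 1 with hE
  -- key identity
  have hid : Pi * V - W = (Uᵀ * V - W) + (-(Eᵀ * (Pi * V - W)) + (-(Eᵀ * W))) := by
    have hEt : (1 : Matrix (Fin K) (Fin K) ℝ) + Eᵀ = (Pi * U)ᵀ := by
      rw [hE, Matrix.transpose_sub, Matrix.transpose_one]; abel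
    have hU : Uᵀ = (1 + Eᵀ) * Pi := by
      calc Uᵀ = Uᵀ * (Piᵀ * Pi) := by rw [hPP, Matrix.mul_one]
        _ = (Pi * U)ᵀ * Pi := by rw [← Matrix.mul_assoc, ← Matrix.transpose_mul]
        _ = (1 + Eᵀ) * Pi := by rw [hEt]
    have hUV : Uᵀ * V = Pi * V + Eᵀ * (Pi * V) := by
      rw [hU, Matrix.mul_assoc, Matrix.add_mul, Matrix.one_mul]
    rw [hUV, Matrix.mul_sub]
    abel
  have hb' : frobNorm E ≤ b := h2
  have hx : frobNorm (Pi * V - W) ≤ a + b * frobNorm (Pi * V - W) + specNorm W * b := by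
    calc frobNorm (Pi * V - W)
        ≤ frobNorm (Uᵀ * V - W) + frobNorm (-(Eᵀ * (Pi * V - W)) + (-(Eᵀ * W))) := by
          have htri := frobNorm_triangle (Uᵀ * V - W) (-(Eᵀ * (Pi * V - W)) + (-(Eᵀ * W)))
          rw [← hid] at htri
          exact htri
      _ ≤ frobNorm (Uᵀ * V - W) +
          (frobNorm (-(Eᵀ * (Pi * V - W))) + frobNorm (-(Eᵀ * W))) := by
          gcongr; exact frobNorm_triangle _ _
      _ = frobNorm (Uᵀ * V - W) + (frobNorm (Eᵀ * (Pi * V - W)) + frobNorm (Eᵀ * W)) := by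
          have hneg : ∀ M : Matrix (Fin K) (Fin L) ℝ, frobNorm (-M) = frobNorm M := by
            intro M; unfold frobNorm; congr 1;
            exact Finset.sum_congr rfl fun i _ => Finset.sum_congr rfl fun j _ => by
              simp [neg_pow]
          rw [hneg, hneg]
      _ ≤ a + (b * frobNorm (Pi * V - W) + specNorm W * b) := by
          gcongr
          · calc frobNorm (Eᵀ * (Pi * V - W))
                ≤ specNorm Eᵀ * frobNorm (Pi * V - W) :=
                  frobNorm_mul_le_spec_mul_frob _ _
              _ ≤ b * frobNorm (Pi * V - W) := by
                  apply mul_le_mul_of_nonneg_right _ (frobNorm_nonneg _)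
                  calc specNorm Eᵀ ≤ frobNorm Eᵀ := specNorm_le_frobNorm _
                    _ = frobNorm E := frobNorm_transpose E
                    _ ≤ b := hb'
          · calc frobNorm (Eᵀ * W) = frobNorm ((Eᵀ * W)ᵀ) := (frobNorm_transpose _).symm
              _ = frobNorm (Wᵀ * E) := by rw [Matrix.transpose_mul, Matrix.transpose_transpose]
              _ ≤ specNorm Wᵀ * frobNorm E := frobNorm_mul_le_spec_mul_frob _ _
              _ ≤ specNorm W * b := by
                  rw [specNorm_transpose]
                  exact mul_le_mul_of_nonneg_left hb' (specNorm_nonneg W)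
      _ = a + b * frobNorm (Pi * V - W) + specNorm W * b := by ring
  rw [le_div_iff₀ (by linarith)]
  nlinarith
end
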